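/- A unit vector ψ ∈ ℂ³ is a single-qutrit stabilizer state if and only if it is a nonzero scalar multiple of one of the following 12 vectors: |0⟩, |1⟩, |2⟩, or |0⟩ + ω^a|1⟩ + ω^b|2⟩ with a, b ∈ ℤ₃; moreover these 12 vectors span pairwise distinct complex lines, so there are exactly 12 single-qutrit stabilizer states up to scalar. -/

import Mathlib

open Real

/-- `ω = e^{2πi/3}`. -/
noncomputable def omega3 : ℂ := Complex.exp (2 * (π : ℂ) * Complex.I / 3)

/-- The matrix `XZ(v,w) = X^{v₁}Z^{w₁}⊗⋯⊗X^{vₙ}Z^{wₙ}` on `n` qutrits: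
its `(y,x)` entry is `ω^{Σⱼ wⱼxⱼ}` if `y = x + v` and `0` otherwise. -/
noncomputable def pauliXZ (n : ℕ) (v w : Fin n → ZMod 3) :
    Matrix (Fin n → ZMod 3) (Fin n → ZMod 3) ℂ :=
  Matrix.of fun y x => if y = x + v then omega3 ^ ((∑ j, w j * x j : ZMod 3).val) else 0

/-- The generalized Pauli group `𝒫ₙ` on `n` qutrits (as a set of matrices). -/
noncomputable def PauliGroup (n : ℕ) :
    Set (Matrix (Fin n → ZMod 3) (Fin n → ZMod 3) ℂ) :=
  { M | ∃ (δ : ZMod 3) (v w : Fin n → ZMod 3), M = omega3 ^ δ.val • pauliXZ n v w }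

/-- `ψ` is an `n`-qutrit stabilizer state: a unit vector admitting an abelian subgroup `S` of
the Pauli group of order `3ⁿ`, whose only scalar multiple of the identity is the identity,
with `sψ = ψ` for all `s ∈ S`. -/
noncomputable def IsStabilizerState (n : ℕ) (ψ : (Fin n → ZMod 3) → ℂ) : Prop :=
  (∑ x, Complex.normSq (ψ x)) = 1 ∧
  ∃ S : Subgroup (Matrix (Fin n → ZMod 3) (Fin n → ZMod 3) ℂ)ˣ,
    Nat.card S = 3 ^ n ∧
    (∀ A ∈ S, ∀ B ∈ S, A * B = B * A) ∧
    (∀ A ∈ S, (A : Matrix (Fin n → ZMod 3) (Fin n → ZMod 3) ℂ) ∈ PauliGroup n) ∧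
    (∀ A ∈ S, ∀ c : ℂ,
      (A : Matrix (Fin n → ZMod 3) (Fin n → ZMod 3) ℂ) = c • 1 →
      (A : Matrix (Fin n → ZMod 3) (Fin n → ZMod 3) ℂ) = 1) ∧
    (∀ A ∈ S, (A : Matrix (Fin n → ZMod 3) (Fin n → ZMod 3) ℂ).mulVec ψ = ψ)

/-- The 12 vectors: `|0⟩, |1⟩, |2⟩` and `|0⟩ + ω^a|1⟩ + ω^b|2⟩` for `a, b ∈ ℤ₃`. -/
noncomputable def twelveVecs : (ZMod 3 ⊕ ZMod 3 × ZMod 3) → ((Fin 1 → ZMod 3) → ℂ)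
  | Sum.inl j => fun x => if x 0 = j then 1 else 0
  | Sum.inr (a, b) => fun x =>
      if x 0 = 0 then 1 else if x 0 = 1 then omega3 ^ a.val else omega3 ^ b.val

lemma omega3_prim : IsPrimitiveRoot omega3 3 := by
  have := Complex.isPrimitiveRoot_exp 3 (by norm_num)
  have h3 : ((3:ℕ):ℂ) = (3:ℂ) := by norm_num
  rw [omega3]
  rw [← h3]
  exact this

lemma omega3_pow_three : omega3 ^ 3 = 1 := omega3_prim.pow_eq_one

lemma omega3_ne_zero : omega3 ≠ 0 := by
  intro h
  have := omega3_pow_three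
  rw [h] at this; norm_num at this

noncomputable def φ3 (a : ZMod 3) : ℂ := omega3 ^ a.val

lemma omega3_pow_mod (k : ℕ) : omega3 ^ k = omega3 ^ (k % 3) := by
  conv_lhs => rw [← Nat.div_add_mod k 3]
  rw [pow_add, pow_mul, omega3_pow_three, one_pow, one_mul]

lemma φ3_natCast (k : ℕ) : φ3 (k : ZMod 3) = omega3 ^ k := by
  rw [φ3, ZMod.val_natCast, ← omega3_pow_mod]

lemma φ3_add (a b : ZMod 3) : φ3 (a + b) = φ3 a * φ3 b := by
  have : ((a.val + b.val : ℕ) : ZMod 3) = a + b := by push_cast [ZMod.natCast_val]; simp [ZMod.intCast_zmod_cast]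
  rw [← this, φ3_natCast, pow_add, φ3, φ3]

lemma φ3_zero : φ3 0 = 1 := by simp [φ3, ZMod.val_zero]

lemma φ3_ne_zero (a : ZMod 3) : φ3 a ≠ 0 := pow_ne_zero _ omega3_ne_zero

lemma φ3_inj {a b : ZMod 3} (h : φ3 a = φ3 b) : a = b := by
  have := omega3_prim.pow_inj (ZMod.val_lt a) (ZMod.val_lt b) h
  exact ZMod.val_injective 3 this

-- helpers
def e3 (t : ZMod 3) : Fin 1 → ZMod 3 := fun _ => t

lemma eq_e3 (y : Fin 1 → ZMod 3) : y = e3 (y 0) :=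
  funext fun i => by rw [Subsingleton.elim i 0]; rfl

lemma funeq_iff (x y : Fin 1 → ZMod 3) : x = y ↔ x 0 = y 0 :=
  ⟨fun h => by rw [h], fun h => by rw [eq_e3 x, eq_e3 y, h]⟩

lemma pauliXZ_apply (v w y x : Fin 1 → ZMod 3) :
    pauliXZ 1 v w y x = if y = x + v then φ3 (w 0 * x 0) else 0 := by
  rw [pauliXZ]
  simp only [Matrix.of_apply, Fin.sum_univ_one]
  rfl

-- generator matrix
noncomputable def gMat (δ : ZMod 3) (v w : Fin 1 → ZMod 3) :
    Matrix (Fin 1 → ZMod 3) (Fin 1 → ZMod 3) ℂ :=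
  omega3 ^ δ.val • pauliXZ 1 v w

lemma gMat_apply (δ : ZMod 3) (v w y x : Fin 1 → ZMod 3) :
    gMat δ v w y x = if y = x + v then φ3 (δ + w 0 * x 0) else 0 := by
  rw [gMat, Matrix.smul_apply, pauliXZ_apply, φ3_add]
  split <;> simp [φ3]

lemma gMat_mulVec (δ : ZMod 3) (v w : Fin 1 → ZMod 3) (ψ : (Fin 1 → ZMod 3) → ℂ)
    (y : Fin 1 → ZMod 3) :
    (gMat δ v w).mulVec ψ y = φ3 (δ + w 0 * (y 0 - v 0)) * ψ (y - v) := by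
  show (∑ x, gMat δ v w y x * ψ x) = _
  rw [Fintype.sum_eq_single (y - v) (fun x hx => by
    rw [gMat_apply, if_neg (fun hc => hx (by rw [hc]; abel)), zero_mul])]
  rw [gMat_apply, if_pos (by abel)]
  have : (y - v) 0 = y 0 - v 0 := rfl
  rw [this]

lemma gMat_mul (δ δ' : ZMod 3) (v w v' w' : Fin 1 → ZMod 3) :
    gMat δ v w * gMat δ' v' w' = gMat (δ + δ' + w 0 * v' 0) (v + v') (w + w') := by
  ext y x
  rw [Matrix.mul_apply]
  rw [Fintype.sum_eq_single (x + v') (fun z hz => by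
    rw [gMat_apply δ' v' w', if_neg (fun hc => hz hc), mul_zero])]
  rw [gMat_apply, gMat_apply, gMat_apply, if_pos rfl]
  by_cases h : y = x + v' + v
  · rw [if_pos h, if_pos (by rw [h]; abel)]
    rw [← φ3_add]
    congr 1
    have h1 : (x + v') 0 = x 0 + v' 0 := rfl
    have h2 : (w + w') 0 = w 0 + w' 0 := rfl
    rw [h1, h2]
    ring
  · rw [if_neg h, if_neg (fun hc => h (by rw [hc]; abel)), zero_mul]

lemma gMat_one : gMat 0 0 0 = 1 := by
  ext y x
  rw [gMat_apply, Matrix.one_apply]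
  simp [φ3_zero, eq_comm]

lemma gMat_cube (δ : ZMod 3) (v w : Fin 1 → ZMod 3) :
    (gMat δ v w) ^ 3 = 1 := by
  have h2 : gMat δ v w * gMat δ v w = gMat (δ + δ + w 0 * v 0) (v + v) (w + w) :=
    gMat_mul _ _ _ _ _ _
  have h3 := gMat_mul (δ + δ + w 0 * v 0) δ (v+v) (w+w) v w
  simp only [Pi.add_apply] at h3
  rw [pow_succ, pow_succ, pow_one, h2, h3]
  have e1 : δ + δ + w 0 * v 0 + δ + (w 0 + w 0) * v 0 = 0 :=
    (show ∀ a b c : ZMod 3, a + a + b * c + a + (b + b) * c = 0 by decide) δ (w 0) (v 0)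
  have e2 : v + v + v = 0 := by funext i; show v i + v i + v i = 0; rw [show ∀ t : ZMod 3, t + t + t = 0 by decide]
  have e3' : w + w + w = 0 := by funext i; show w i + w i + w i = 0; rw [show ∀ t : ZMod 3, t + t + t = 0 by decide]
  rw [e1, e2, e3', gMat_one]

lemma gMat_scalar {δ : ZMod 3} {v w : Fin 1 → ZMod 3} {c : ℂ}
    (h : gMat δ v w = c • 1) : v 0 = 0 ∧ w 0 = 0 := by
  have hv : v 0 = 0 := by
    by_contra hv
    have := congrFun (congrFun h (e3 (v 0))) (e3 0)
    rw [gMat_apply] at this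
    rw [if_pos (by funext i; rw [Subsingleton.elim i 0]; show v 0 = 0 + v 0; rw [zero_add])] at this
    rw [Matrix.smul_apply, Matrix.one_apply, if_neg (by
      intro hc
      exact hv (congrFun hc 0))] at this
    simp at this
    exact φ3_ne_zero _ this
  refine ⟨hv, ?_⟩
  have hvz : v = 0 := by funext i; rw [Subsingleton.elim i 0]; exact hv
  have h0 := congrFun (congrFun h (e3 0)) (e3 0)
  have h1 := congrFun (congrFun h (e3 1)) (e3 1)
  rw [gMat_apply, hvz] at h0 h1
  rw [if_pos (by simp)] at h0
  rw [if_pos (by simp)] at h1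
  rw [Matrix.smul_apply, Matrix.one_apply_eq] at h0 h1
  simp only [smul_eq_mul, mul_one] at h0 h1
  have : φ3 (δ + w 0 * (e3 1) 0) = φ3 (δ + w 0 * (e3 0) 0) := by rw [h0, h1]
  have := φ3_inj this
  have hw : w 0 * 1 = w 0 * 0 := by
    have := add_left_cancel this
    simpa [e3] using this
  simpa using hw


lemma gMat_mem (δ : ZMod 3) (v w : Fin 1 → ZMod 3) : gMat δ v w ∈ PauliGroup 1 :=
  ⟨δ, v, w, rfl⟩

noncomputable def gUnit (δ : ZMod 3) (v w : Fin 1 → ZMod 3) :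
    (Matrix (Fin 1 → ZMod 3) (Fin 1 → ZMod 3) ℂ)ˣ :=
  ⟨gMat δ v w, (gMat δ v w) ^ 2,
    by rw [← pow_succ']; exact gMat_cube δ v w,
    by rw [← pow_succ]; exact gMat_cube δ v w⟩

instance : Fact (Nat.Prime 3) := ⟨by norm_num⟩

lemma gUnit_cube (δ : ZMod 3) (v w : Fin 1 → ZMod 3) : (gUnit δ v w) ^ 3 = 1 := by
  apply Units.ext
  rw [Units.val_pow_eq_pow_val]
  exact gMat_cube δ v w

lemma two_smul_zmod3 {t : ZMod 3} (h : t + t = 0) : t = 0 := by revert h; revert t; decide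

lemma stab_of_fix (δ : ZMod 3) (v w : Fin 1 → ZMod 3) (hnz : ¬(v 0 = 0 ∧ w 0 = 0))
    (ψ : (Fin 1 → ZMod 3) → ℂ) (hψ : (∑ x, Complex.normSq (ψ x)) = 1)
    (hfix : (gMat δ v w).mulVec ψ = ψ) : IsStabilizerState 1 ψ := by
  set g := gUnit δ v w with hg
  have h3 : g ^ (3:ℤ) = 1 := by
    rw [show (3:ℤ) = ((3:ℕ):ℤ) from rfl, zpow_natCast]
    exact gUnit_cube δ v w
  have hmem : ∀ A ∈ Subgroup.zpowers g, ∃ m : ℕ, m < 3 ∧ A = g ^ m := by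
    intro A hA
    obtain ⟨k, hk⟩ := Subgroup.mem_zpowers_iff.mp hA
    refine ⟨(k % 3).toNat, ?_, ?_⟩
    · have : k % 3 < 3 := Int.emod_lt_of_pos k (by norm_num)
      omega
    · have hnn : 0 ≤ k % 3 := Int.emod_nonneg k (by norm_num)
      have heq : g ^ k = g ^ (k % 3) := by
        conv_lhs => rw [← Int.mul_ediv_add_emod k 3]
        rw [zpow_add, zpow_mul, h3, one_zpow, one_mul]
      rw [← hk, heq, ← zpow_natCast, Int.toNat_of_nonneg hnn]
  -- explicit powers
  have hg0 : ((g ^ 0 : _ˣ) : Matrix (Fin 1 → ZMod 3) (Fin 1 → ZMod 3) ℂ) = gMat 0 0 0 := by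
    rw [pow_zero, Units.val_one, gMat_one]
  have hg1 : ((g ^ 1 : _ˣ) : Matrix (Fin 1 → ZMod 3) (Fin 1 → ZMod 3) ℂ) = gMat δ v w := by
    rw [pow_one]; rfl
  have hg2 : ((g ^ 2 : _ˣ) : Matrix (Fin 1 → ZMod 3) (Fin 1 → ZMod 3) ℂ)
      = gMat (δ + δ + w 0 * v 0) (v + v) (w + w) := by
    rw [Units.val_pow_eq_pow_val, pow_two]
    show gMat δ v w * gMat δ v w = _
    exact gMat_mul δ δ v w v w
  refine ⟨hψ, Subgroup.zpowers g, ?_, ?_, ?_, ?_, ?_⟩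
  · rw [Nat.card_zpowers, pow_one]
    refine orderOf_eq_prime (gUnit_cube δ v w) ?_
    intro h1
    have : gMat δ v w = (1:ℂ) • 1 := by
      rw [one_smul]
      exact congrArg Units.val h1
    exact hnz (gMat_scalar this)
  · intro A hA B hB
    obtain ⟨m, _, rfl⟩ := hmem A hA
    obtain ⟨l, _, rfl⟩ := hmem B hB
    rw [← pow_add, ← pow_add, add_comm]
  · intro A hA
    obtain ⟨m, hm, rfl⟩ := hmem A hA
    interval_cases m
    · rw [hg0]; exact gMat_mem _ _ _
    · rw [hg1]; exact gMat_mem _ _ _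
    · rw [hg2]; exact gMat_mem _ _ _
  · intro A hA c hc
    obtain ⟨m, hm, rfl⟩ := hmem A hA
    interval_cases m
    · rw [hg0, gMat_one]
    · rw [hg1] at hc
      exact absurd (gMat_scalar hc) hnz
    · rw [hg2] at hc
      obtain ⟨h1, h2⟩ := gMat_scalar hc
      refine absurd ⟨?_, ?_⟩ hnz
      · exact two_smul_zmod3 h1
      · exact two_smul_zmod3 h2
  · have key : ∀ m : ℕ, ((gMat δ v w) ^ m).mulVec ψ = ψ := by
      intro m
      induction m with
      | zero => rw [pow_zero, Matrix.one_mulVec]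
      | succ k ih => rw [pow_succ, ← Matrix.mulVec_mulVec, hfix, ih]
    intro A hA
    obtain ⟨m, hm, rfl⟩ := hmem A hA
    rw [Units.val_pow_eq_pow_val]
    exact key m


lemma e3_sub (t : ZMod 3) (v : Fin 1 → ZMod 3) : e3 t - v = e3 (t - v 0) :=
  funext fun i => by rw [Subsingleton.elim i 0]; rfl

lemma zmod3_cases (t : ZMod 3) : t = 0 ∨ t = 1 ∨ t = 2 := by revert t; decide

lemma sum_zero_of {ψ : (Fin 1 → ZMod 3) → ℂ} (h : ∀ t : ZMod 3, ψ (e3 t) = 0) :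
    (∑ x, Complex.normSq (ψ x)) = 0 :=
  Finset.sum_eq_zero fun x _ => by rw [eq_e3 x, h (x 0)]; simp

lemma back_inl (j : ZMod 3) (c : ℂ) (ψ : (Fin 1 → ZMod 3) → ℂ)
    (hψ : (∑ x, Complex.normSq (ψ x)) = 1)
    (h : ψ = c • twelveVecs (Sum.inl j)) : IsStabilizerState 1 ψ := by
  apply stab_of_fix (-j) 0 (e3 1) (by intro ⟨_, hw⟩; exact one_ne_zero hw) ψ hψ
  funext y
  rw [gMat_mulVec, h]
  simp only [Pi.smul_apply, smul_eq_mul, Pi.zero_apply, sub_zero, twelveVecs]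
  by_cases hy : y 0 = j
  · rw [if_pos hy, hy]
    have : -j + (e3 1) 0 * j = 0 := by show -j + 1 * j = 0; ring
    rw [this, φ3_zero, one_mul]
  · rw [if_neg hy, mul_zero, mul_zero]

lemma back_inr (a b : ZMod 3) (c : ℂ) (ψ : (Fin 1 → ZMod 3) → ℂ)
    (hψ : (∑ x, Complex.normSq (ψ x)) = 1)
    (h : ψ = c • twelveVecs (Sum.inr (a, b))) : IsStabilizerState 1 ψ := by
  apply stab_of_fix a (e3 1) (e3 (a + b)) (by intro ⟨hv, _⟩; exact one_ne_zero hv) ψ hψ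
  funext y
  rw [gMat_mulVec, h, eq_e3 y, e3_sub]
  simp only [Pi.smul_apply, smul_eq_mul, twelveVecs, e3]
  rcases zmod3_cases (y 0) with h0 | h0 | h0 <;> rw [h0]
  · rw [show (0:ZMod 3) - 1 = 2 by decide]
    simp only [show (2:ZMod 3) = 0 ↔ False by decide, show (2:ZMod 3) = 1 ↔ False by decide, if_false, if_true]
    rw [show omega3 ^ b.val = φ3 b from rfl, mul_comm c, ← mul_assoc, ← φ3_add]
    rw [(show ∀ a b : ZMod 3, a + (a + b) * 2 + b = 0 by decide) a b]
    rw [φ3_zero, one_mul, mul_one]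
  · rw [show (1:ZMod 3) - 1 = 0 by decide]
    simp only [show (1:ZMod 3) = 0 ↔ False by decide, if_false, if_true, mul_one]
    rw [show omega3 ^ a.val = φ3 a from rfl]
    rw [(show ∀ a b : ZMod 3, a + (a + b) * 0 = a by decide) a b, mul_comm]
  · rw [show (2:ZMod 3) - 1 = 1 by decide]
    simp only [show (1:ZMod 3) = 0 ↔ False by decide, show (2:ZMod 3) = 0 ↔ False by decide, show (2:ZMod 3) = 1 ↔ False by decide, if_false, if_true]
    rw [show omega3 ^ a.val = φ3 a from rfl, show omega3 ^ b.val = φ3 b from rfl]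
    rw [mul_comm c, ← mul_assoc, ← φ3_add]
    rw [(show ∀ a b : ZMod 3, a + (a + b) * 1 + a = b by decide) a b, mul_comm]

lemma forward (ψ : (Fin 1 → ZMod 3) → ℂ) (hψ : (∑ x, Complex.normSq (ψ x)) = 1)
    (hs : IsStabilizerState 1 ψ) :
    ∃ (i : ZMod 3 ⊕ ZMod 3 × ZMod 3) (c : ℂ), c ≠ 0 ∧ ψ = c • twelveVecs i := by
  obtain ⟨_, S, hcard, hcomm, hmemP, hscal, hfix⟩ := hs
  rcases Subgroup.bot_or_exists_ne_one S with hbot | ⟨A, hA, hA1⟩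
  · rw [hbot, Subgroup.card_bot] at hcard; norm_num at hcard
  obtain ⟨δ, v, w, hAval⟩ := hmemP A hA
  have hAval' : (A : Matrix (Fin 1 → ZMod 3) (Fin 1 → ZMod 3) ℂ) = gMat δ v w := hAval
  have hp1 : pauliXZ 1 0 0 = 1 := by
    have := gMat_one
    rwa [gMat, ZMod.val_zero, pow_zero, one_smul] at this
  have hnz : ¬(v 0 = 0 ∧ w 0 = 0) := by
    rintro ⟨hv, hw⟩
    have hv' : v = 0 := funext fun i => by rw [Subsingleton.elim i 0]; exact hv
    have hw' : w = 0 := funext fun i => by rw [Subsingleton.elim i 0]; exact hw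
    have hsc : (A : Matrix (Fin 1 → ZMod 3) (Fin 1 → ZMod 3) ℂ) = (omega3 ^ δ.val) • 1 := by
      rw [hAval', hv', hw', gMat, hp1]
    have := hscal A hA _ hsc
    exact hA1 (Units.ext this)
  have hR' : ∀ t : ZMod 3, φ3 (δ + w 0 * (t - v 0)) * ψ (e3 (t - v 0)) = ψ (e3 t) := by
    intro t
    have := congrFun (hfix A hA) (e3 t)
    rw [hAval', gMat_mulVec, e3_sub] at this
    exact this
  by_cases hv : v 0 = 0
  · have hw : w 0 ≠ 0 := fun h => hnz ⟨hv, h⟩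
    obtain ⟨j, hj⟩ :=
      (show ∀ d w0 : ZMod 3, w0 ≠ 0 → ∃ j, ∀ t, d + w0 * t = 0 ↔ t = j by decide) δ (w 0) hw
    have hzero : ∀ t, t ≠ j → ψ (e3 t) = 0 := by
      intro t ht
      by_contra hne
      have h0 := hR' t
      rw [hv, sub_zero] at h0
      have h1 : φ3 (δ + w 0 * t) = 1 :=
        mul_right_cancel₀ hne (by rw [h0, one_mul])
      exact ht ((hj t).1 (φ3_inj (h1.trans φ3_zero.symm)))
    refine ⟨Sum.inl j, ψ (e3 j), ?_, ?_⟩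
    · intro h0
      have hall : ∀ t, ψ (e3 t) = 0 := fun t => by
        by_cases ht : t = j
        · rw [ht]; exact h0
        · exact hzero t ht
      rw [sum_zero_of hall] at hψ
      norm_num at hψ
    · funext y
      rw [eq_e3 y]
      simp only [Pi.smul_apply, smul_eq_mul, twelveVecs]
      by_cases ht : y 0 = j
      · rw [show (e3 (y 0)) 0 = y 0 from rfl, if_pos ht, mul_one, ht]
      · rw [show (e3 (y 0)) 0 = y 0 from rfl, if_neg ht, mul_zero]
        exact hzero _ ht
  · have key : ∃ a b : ZMod 3, ψ (e3 1) = φ3 a * ψ (e3 0) ∧ ψ (e3 2) = φ3 b * ψ (e3 0) := by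
      rcases zmod3_cases (v 0) with h0 | h0 | h0
      · exact absurd h0 hv
      · have e1 := hR' 1
        have e2 := hR' 2
        rw [h0, show (1:ZMod 3) - 1 = 0 by decide] at e1
        rw [h0, show (2:ZMod 3) - 1 = 1 by decide] at e2
        refine ⟨δ + w 0 * 0, (δ + w 0 * 1) + (δ + w 0 * 0), e1.symm, ?_⟩
        rw [← e2, ← e1, φ3_add (δ + w 0 * 1) (δ + w 0 * 0), φ3_add δ (w 0 * 1), mul_assoc, mul_assoc, mul_assoc]
      · have e1 := hR' 1
        have e2 := hR' 2
        rw [h0, show (2:ZMod 3) - 2 = 0 by decide] at e2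
        rw [h0, show (1:ZMod 3) - 2 = 2 by decide] at e1
        refine ⟨(δ + w 0 * 2) + (δ + w 0 * 0), δ + w 0 * 0, ?_, e2.symm⟩
        rw [← e1, ← e2, φ3_add (δ + w 0 * 2) (δ + w 0 * 0), φ3_add δ (w 0 * 2), mul_assoc, mul_assoc, mul_assoc]
    obtain ⟨a, b, ha, hb⟩ := key
    refine ⟨Sum.inr (a, b), ψ (e3 0), ?_, ?_⟩
    · intro h0
      have hall : ∀ t, ψ (e3 t) = 0 := by
        intro t
        rcases zmod3_cases t with ht | ht | ht <;> rw [ht]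
        · exact h0
        · rw [ha, h0, mul_zero]
        · rw [hb, h0, mul_zero]
      rw [sum_zero_of hall] at hψ
      norm_num at hψ
    · funext y
      rw [eq_e3 y]
      simp only [Pi.smul_apply, smul_eq_mul, twelveVecs]
      rcases zmod3_cases (y 0) with h0 | h0 | h0 <;>
        rw [h0, show ∀ t : ZMod 3, (e3 t) 0 = t from fun _ => rfl]
      · rw [if_pos rfl, mul_one]
      · rw [if_neg (by decide), if_pos rfl, ha, mul_comm]
        rfl
      · rw [if_neg (by decide), if_neg (by decide), hb, mul_comm]
        rfl

lemma tv_inl (j t : ZMod 3) : twelveVecs (Sum.inl j) (e3 t) = if t = j then 1 else 0 := rfl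

lemma tv_inr (a b t : ZMod 3) :
    twelveVecs (Sum.inr (a, b)) (e3 t) = if t = 0 then 1 else if t = 1 then φ3 a else φ3 b := rfl

lemma tv_inr_ne_zero (a b : ZMod 3) (x : Fin 1 → ZMod 3) :
    twelveVecs (Sum.inr (a, b)) x ≠ 0 := by
  show (if x 0 = 0 then 1 else if x 0 = 1 then omega3 ^ a.val else omega3 ^ b.val) ≠ 0
  split_ifs
  exacts [one_ne_zero, φ3_ne_zero a, φ3_ne_zero b]

lemma zmod3_succ_ne (j : ZMod 3) : j + 1 ≠ j := by revert j; decide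

lemma distinct : ∀ i i' : ZMod 3 ⊕ ZMod 3 × ZMod 3, i ≠ i' →
    ∀ c : ℂ, twelveVecs i ≠ c • twelveVecs i' := by
  intro i i' hne c h
  have F : ∀ t : ZMod 3, twelveVecs i (e3 t) = c * twelveVecs i' (e3 t) := fun t => by
    have := congrFun h (e3 t)
    rwa [Pi.smul_apply, smul_eq_mul] at this
  cases i with
  | inl j =>
    cases i' with
    | inl j' =>
      have hj : j ≠ j' := fun hc => hne (by rw [hc])
      have := F j
      rw [tv_inl, tv_inl, if_pos rfl, if_neg hj, mul_zero] at this
      exact one_ne_zero this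
    | inr p =>
      obtain ⟨a, b⟩ := p
      have h1 := F (j + 1)
      rw [tv_inl, if_neg (zmod3_succ_ne j)] at h1
      have hc0 : c = 0 := by
        rcases mul_eq_zero.mp h1.symm with h' | h'
        · exact h'
        · exact absurd h' (tv_inr_ne_zero a b (e3 (j + 1)))
      have h2 := F j
      rw [tv_inl, if_pos rfl, hc0, zero_mul] at h2
      exact one_ne_zero h2
  | inr p =>
    obtain ⟨a, b⟩ := p
    cases i' with
    | inl j =>
      have h1 := F (j + 1)
      rw [tv_inl, if_neg (zmod3_succ_ne j), mul_zero] at h1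
      exact tv_inr_ne_zero a b (e3 (j + 1)) h1
    | inr p' =>
      obtain ⟨a', b'⟩ := p'
      have h0 := F 0
      rw [tv_inr, tv_inr, if_pos rfl, if_pos rfl, mul_one] at h0
      have h1 := F 1
      rw [tv_inr, tv_inr, if_neg (by decide), if_pos rfl, if_neg (by decide), if_pos rfl,
        ← h0, one_mul] at h1
      have h2 := F 2
      rw [tv_inr, tv_inr, if_neg (by decide), if_neg (by decide), if_neg (by decide),
        if_neg (by decide), ← h0, one_mul] at h2
      exact hne (by rw [φ3_inj h1, φ3_inj h2])

/-- A unit vector `ψ ∈ ℂ³` is a single-qutrit stabilizer state iff it is a nonzero scalar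
multiple of one of the 12 vectors `|0⟩, |1⟩, |2⟩, |0⟩+ω^a|1⟩+ω^b|2⟩`; moreover these 12
vectors span pairwise distinct complex lines. -/
theorem single_qutrit_stabilizer_states :
    (∀ ψ : (Fin 1 → ZMod 3) → ℂ, (∑ x, Complex.normSq (ψ x)) = 1 →
      (IsStabilizerState 1 ψ ↔
        ∃ (i : ZMod 3 ⊕ ZMod 3 × ZMod 3) (c : ℂ), c ≠ 0 ∧ ψ = c • twelveVecs i)) ∧
    (∀ i i' : ZMod 3 ⊕ ZMod 3 × ZMod 3, i ≠ i' →
      ∀ c : ℂ, twelveVecs i ≠ c • twelveVecs i') := by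
  refine ⟨?_, distinct⟩
  intro ψ hψ
  constructor
  · exact forward ψ hψ
  · rintro ⟨i, c, hc, rfl⟩
    cases i with
    | inl j => exact back_inl j c _ hψ rfl
    | inr p =>
      obtain ⟨a, b⟩ := p
      exact back_inr a b c _ hψ rfl
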